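/- Let λ₁ ≤ λ₂ = 0 < λ₃ ≤ λ₄ ≤ λ₅ ≤ λ₆ be real numbers with λ₁+⋯+λ₆ = 6H, H > 0, σ₅(λ) = 0, and ∑_{1≤i<j≤6}(λᵢ−λⱼ)²λᵢλⱼ ≤ 0. Then λ₁ = λ₂ = 0, λ₃ = λ₄ = λ₅ = λ₆ = (3/2)H, and R := (1/15)σ₂(λ) = (9/10)H². -/

import Mathlib

/-! Since `λ₂ = 0`, the only surviving term of `σ₅` is `λ₁λ₃λ₄λ₅λ₆`, and `λ₃, …, λ₆ > 0` forces
`λ₁ = 0`. All eigenvalues are then nonnegative, so every term of the Simons sum is nonnegative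
and hence vanishes, which makes the positive ones equal; their value comes from the trace, and
`σ₂` is then `6 · (3H/2)²`. -/

/-- the `r`-th elementary symmetric function -/
def esym {n : ℕ} (x : Fin n → ℝ) (r : ℕ) : ℝ :=
  ∑ t ∈ (Finset.univ : Finset (Fin n)).powersetCard r, ∏ i ∈ t, x i

open Finset

theorem eq_of_sum_sq_sub_mul_mul_nonpos {ι : Type*} [Fintype ι] [LinearOrder ι] {x : ι → ℝ}
    (hx : ∀ i, 0 ≤ x i)
    (h : ∑ i, ∑ j ∈ univ.filter (fun j => i < j), (x i - x j) ^ 2 * (x i * x j) ≤ 0)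
    {i j : ι} (hi : 0 < x i) (hj : 0 < x j) : x i = x j := by
  have hterm : ∀ i j, 0 ≤ (x i - x j) ^ 2 * (x i * x j) := fun i j =>
    mul_nonneg (sq_nonneg _) (mul_nonneg (hx i) (hx j))
  have hzero : ∀ i j, i < j → (x i - x j) ^ 2 * (x i * x j) = 0 := by
    have hsum := le_antisymm h (sum_nonneg fun i _ => sum_nonneg fun j _ => hterm i j)
    intro i j hij
    rw [sum_eq_zero_iff_of_nonneg fun i _ => sum_nonneg fun j _ => hterm i j] at hsum
    exact (sum_eq_zero_iff_of_nonneg fun j _ => hterm i j).mp (hsum i (mem_univ i)) j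
      (by simpa using hij)
  have key : ∀ a b : ℝ, 0 < a → 0 < b → (a - b) ^ 2 * (a * b) = 0 → a = b := by
    intro a b ha hb hab
    rcases mul_eq_zero.mp hab with h | h
    · exact sub_eq_zero.mp (pow_eq_zero_iff two_ne_zero |>.mp h)
    · exact absurd h (mul_pos ha hb).ne'
  rcases lt_trichotomy i j with hij | rfl | hji
  · exact key _ _ hi hj (hzero i j hij)
  · rfl
  · exact (key _ _ hj hi (hzero j i hji)).symm

theorem esym_sub_one_of_eq_zero {n : ℕ} (x : Fin n → ℝ) {k : Fin n} (hk : x k = 0) :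
    esym x (n - 1) = ∏ i ∈ univ.erase k, x i := by
  refine sum_eq_single_of_mem _ (by simp [mem_powersetCard, card_erase_of_mem]) ?_
  intro t ht hne
  rw [mem_powersetCard] at ht
  refine prod_eq_zero (i := k) ?_ hk
  by_contra hkt
  refine hne (eq_of_subset_of_card_le (fun i hi => ?_) ?_)
  · exact mem_erase.mpr ⟨fun hik => hkt (hik ▸ hi), mem_univ i⟩
  · simp [ht.2, card_erase_of_mem]

theorem esym_ite_mem {n : ℕ} (s : Finset (Fin n)) (c : ℝ) (r : ℕ) :
    esym (fun i => if i ∈ s then c else 0) r = (s.card.choose r : ℝ) * c ^ r := by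
  have hprod : ∀ t ∈ (univ : Finset (Fin n)).powersetCard r,
      ∏ i ∈ t, (if i ∈ s then c else 0) = if t ⊆ s then c ^ r else 0 := by
    intro t ht
    rw [mem_powersetCard] at ht
    split_ifs with hts
    · rw [prod_congr rfl fun i hi => if_pos (hts hi), prod_const, ht.2]
    · obtain ⟨i, hit, his⟩ := not_subset.mp hts
      exact prod_eq_zero hit (if_neg his)
  have hfilter : ((univ : Finset (Fin n)).powersetCard r).filter (· ⊆ s) = s.powersetCard r := by
    ext t
    simp only [mem_filter, mem_powersetCard, subset_univ, true_and]
    tauto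
  rw [esym, sum_congr rfl hprod, ← sum_filter, hfilter, sum_const, card_powersetCard,
    nsmul_eq_mul]

theorem stmt_15_general (l : Fin 6 → ℝ) (H : ℝ)
    (h1 : l 1 = 0) (h2 : 0 < l 2)
    (h23 : l 2 ≤ l 3) (h34 : l 3 ≤ l 4) (h45 : l 4 ≤ l 5)
    (hsum : ∑ i, l i = 6 * H)
    (hσ5 : esym l 5 = 0)
    (hSimons : ∑ i, ∑ j ∈ Finset.univ.filter (fun j => i < j),
      (l i - l j) ^ 2 * (l i * l j) ≤ 0) :
    l 0 = 0 ∧ l 1 = 0 ∧ l 2 = (3 / 2) * H ∧ l 3 = (3 / 2) * H ∧ l 4 = (3 / 2) * H ∧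
    l 5 = (3 / 2) * H ∧ (1 / 15) * esym l 2 = (9 / 10) * H ^ 2 := by
  have h3 : 0 < l 3 := h2.trans_le h23
  have h4 : 0 < l 4 := h3.trans_le h34
  have h5 : 0 < l 5 := h4.trans_le h45
  have h0 : l 0 = 0 := by
    obtain ⟨i, hi, hli⟩ := prod_eq_zero_iff.mp (esym_sub_one_of_eq_zero l h1 ▸ hσ5)
    fin_cases i <;> simp_all [ne_of_gt]
  have hnonneg : ∀ i, 0 ≤ l i := by
    intro i; fin_cases i <;> simp [h0, h1, h2.le, h3.le, h4.le, h5.le]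
  have e3 := eq_of_sum_sq_sub_mul_mul_nonpos hnonneg hSimons h3 h2
  have e4 := eq_of_sum_sq_sub_mul_mul_nonpos hnonneg hSimons h4 h2
  have e5 := eq_of_sum_sq_sub_mul_mul_nonpos hnonneg hSimons h5 h2
  have hc : l 2 = (3 / 2) * H := by
    rw [Fin.sum_univ_six] at hsum
    linarith
  have hl : l = fun i => if i ∈ ({2, 3, 4, 5} : Finset (Fin 6)) then (3 / 2) * H else 0 := by
    funext i; fin_cases i <;> simp [h0, h1, hc, e3, e4, e5]
  refine ⟨h0, h1, hc, e3 ▸ hc, e4 ▸ hc, e5 ▸ hc, ?_⟩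
  rw [hl, esym_ite_mem, show ({2, 3, 4, 5} : Finset (Fin 6)).card = 4 from rfl,
    Nat.choose_two_right]
  norm_num
  ring

theorem stmt_15 (l : Fin 6 → ℝ) (H : ℝ)
    (h01 : l 0 ≤ l 1) (h1 : l 1 = 0) (h2 : 0 < l 2)
    (h23 : l 2 ≤ l 3) (h34 : l 3 ≤ l 4) (h45 : l 4 ≤ l 5)
    (hH : 0 < H) (hsum : ∑ i, l i = 6 * H)
    (hσ5 : esym l 5 = 0)
    (hSimons : ∑ i, ∑ j ∈ Finset.univ.filter (fun j => i < j),
      (l i - l j) ^ 2 * (l i * l j) ≤ 0) :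
    l 0 = 0 ∧ l 1 = 0 ∧ l 2 = (3 / 2) * H ∧ l 3 = (3 / 2) * H ∧ l 4 = (3 / 2) * H ∧
    l 5 = (3 / 2) * H ∧ (1 / 15) * esym l 2 = (9 / 10) * H ^ 2 :=
  stmt_15_general l H h1 h2 h23 h34 h45 hsum hσ5 hSimons
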